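/- arXiv:1009.4405 — 3 statements merged into one kernel-verified Lean document; each statement's English description precedes it below -/
import Mathlib

section
/- For all multi-indices α, β ∈ ℕ^n, the smooth function E_{α,β}(Z) = b^α(z^β e^{−π|z|²/2}) on ℝ^{2n} satisfies 𝓛 E_{α,β} = 4π|α| · E_{α,β}, where |α| = α_1 + ⋯ + α_n. (Part of Theorem 1.1: the numbers 4π|α|, α ∈ ℕ^n, are eigenvalues of the model operator 𝓛.) -/
open MeasureTheory Complex MvPolynomial

noncomputable section

/-- The Wirtinger derivative `∂/∂z_i` on `ℂⁿ ≅ ℝ^{2n}`, defined via real Fréchet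
derivatives in the directions corresponding to the real coordinates
`Z_{2i-1}, Z_{2i}` (so that `z_i = Z_{2i-1} + √-1 Z_{2i}`). -/
def wirtingerZ (n : ℕ) (i : Fin n) (f : (Fin n → ℂ) → ℂ) (Z : Fin n → ℂ) : ℂ :=
  (1 / 2 : ℂ) * (fderiv ℝ f Z (Pi.single i 1) - Complex.I * fderiv ℝ f Z (Pi.single i Complex.I))

/-- The Wirtinger derivative `∂/∂z̄_i`. -/
def wirtingerZBar (n : ℕ) (i : Fin n) (f : (Fin n → ℂ) → ℂ) (Z : Fin n → ℂ) : ℂ :=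
  (1 / 2 : ℂ) * (fderiv ℝ f Z (Pi.single i 1) + Complex.I * fderiv ℝ f Z (Pi.single i Complex.I))

/-- The annihilation-type operator `b_i f = -2 ∂f/∂z_i + π z̄_i f`. -/
def bOp (n : ℕ) (i : Fin n) (f : (Fin n → ℂ) → ℂ) : (Fin n → ℂ) → ℂ :=
  fun Z => -2 * wirtingerZ n i f Z + (Real.pi : ℂ) * (starRingEnd ℂ) (Z i) * f Z

/-- The creation-type operator `b_i⁺ f = 2 ∂f/∂z̄_i + π z_i f`. -/
def bPlusOp (n : ℕ) (i : Fin n) (f : (Fin n → ℂ) → ℂ) : (Fin n → ℂ) → ℂ :=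
  fun Z => 2 * wirtingerZBar n i f Z + (Real.pi : ℂ) * Z i * f Z

/-- The model operator `𝓛 f = Σ_i b_i (b_i⁺ f)`. -/
def modelL (n : ℕ) (f : (Fin n → ℂ) → ℂ) : (Fin n → ℂ) → ℂ :=
  fun Z => ∑ i : Fin n, bOp n i (bPlusOp n i f) Z

/-- `b^α = b_1^{α_1} ∘ ⋯ ∘ b_n^{α_n}`. -/
def bPow (n : ℕ) (α : Fin n → ℕ) : ((Fin n → ℂ) → ℂ) → ((Fin n → ℂ) → ℂ) :=
  (List.finRange n).foldr (fun i T => (bOp n i)^[α i] ∘ T) id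

/-- The Gaussian `e^{-π|z|²/2}`. -/
def modelGauss (n : ℕ) (Z : Fin n → ℂ) : ℂ :=
  Complex.exp (-((Real.pi : ℂ) / 2) * ∑ i : Fin n, (Complex.normSq (Z i) : ℂ))

/-- The model Bergman kernel
`𝓟(Z,Z') = exp(-(π/2) Σ_i (|z_i|² + |z'_i|² - 2 z_i z̄'_i))`. -/
def modelP (n : ℕ) (Z Z' : Fin n → ℂ) : ℂ :=
  Complex.exp (-((Real.pi : ℂ) / 2) *
    ∑ i : Fin n, ((Complex.normSq (Z i) : ℂ) + (Complex.normSq (Z' i) : ℂ)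
      - 2 * Z i * (starRingEnd ℂ) (Z' i)))

/-- The eigenfunctions `E_{α,β} = b^α (z^β e^{-π|z|²/2})`. -/
def eigFun (n : ℕ) (α β : Fin n → ℕ) : (Fin n → ℂ) → ℂ :=
  bPow n α (fun Z => (∏ i : Fin n, Z i ^ β i) * modelGauss n Z)


namespace ModelAux

variable {n : ℕ}

/-! ### Directional derivative toolbox -/

/-- Directional derivative. -/
def Dv (n : ℕ) (v : Fin n → ℂ) (f : (Fin n → ℂ) → ℂ) (Z : Fin n → ℂ) : ℂ := fderiv ℝ f Z v

lemma contDiff_Dv {f : (Fin n → ℂ) → ℂ} (hf : ContDiff ℝ (⊤ : ℕ∞) f) (v : Fin n → ℂ) :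
    ContDiff ℝ (⊤ : ℕ∞) (Dv n v f) := by
  have h1 : ContDiff ℝ (⊤ : ℕ∞) (fderiv ℝ f) := hf.fderiv_right (mod_cast le_top)
  exact (ContinuousLinearMap.apply ℝ ℂ v).contDiff.comp h1

lemma dA {f : (Fin n → ℂ) → ℂ} (hf : ContDiff ℝ (⊤ : ℕ∞) f) (Z : Fin n → ℂ) :
    DifferentiableAt ℝ f Z := (hf.differentiable (by simp)).differentiableAt

lemma Dv_add {f g : (Fin n → ℂ) → ℂ} {Z : Fin n → ℂ} (hf : DifferentiableAt ℝ f Z)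
    (hg : DifferentiableAt ℝ g Z) (v : Fin n → ℂ) :
    Dv n v (fun Z => f Z + g Z) Z = Dv n v f Z + Dv n v g Z := by
  simp [Dv, fderiv_fun_add hf hg]

lemma Dv_sub {f g : (Fin n → ℂ) → ℂ} {Z : Fin n → ℂ} (hf : DifferentiableAt ℝ f Z)
    (hg : DifferentiableAt ℝ g Z) (v : Fin n → ℂ) :
    Dv n v (fun Z => f Z - g Z) Z = Dv n v f Z - Dv n v g Z := by
  simp [Dv, fderiv_fun_sub hf hg]

lemma Dv_mul {f g : (Fin n → ℂ) → ℂ} {Z : Fin n → ℂ} (hf : DifferentiableAt ℝ f Z)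
    (hg : DifferentiableAt ℝ g Z) (v : Fin n → ℂ) :
    Dv n v (fun Z => f Z * g Z) Z = Dv n v f Z * g Z + f Z * Dv n v g Z := by
  simp [Dv, fderiv_fun_mul hf hg]; ring

lemma Dv_const_mul {f : (Fin n → ℂ) → ℂ} {Z : Fin n → ℂ} (hf : DifferentiableAt ℝ f Z)
    (c : ℂ) (v : Fin n → ℂ) :
    Dv n v (fun Z => c * f Z) Z = c * Dv n v f Z := by
  simp [Dv, fderiv_const_mul hf c]

lemma Dv_const (c : ℂ) (v Z : Fin n → ℂ) : Dv n v (fun _ => c) Z = 0 := by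
  simp [Dv]

lemma Dv_sum {ι : Type*} (s : Finset ι) {g : ι → (Fin n → ℂ) → ℂ} {Z : Fin n → ℂ}
    (hg : ∀ i ∈ s, DifferentiableAt ℝ (g i) Z) (v : Fin n → ℂ) :
    Dv n v (fun Z => ∑ i ∈ s, g i Z) Z = ∑ i ∈ s, Dv n v (g i) Z := by
  simp [Dv, fderiv_fun_sum hg]

lemma Dv_coord (j : Fin n) (v Z : Fin n → ℂ) : Dv n v (fun Z => Z j) Z = v j := by
  have h := hasFDerivAt_apply (𝕜 := ℝ) j Z
  simp [Dv, h.fderiv]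

lemma Dv_conj_coord (j : Fin n) (v Z : Fin n → ℂ) :
    Dv n v (fun Z => (starRingEnd ℂ) (Z j)) Z = (starRingEnd ℂ) (v j) := by
  have h := ((Complex.conjCLE.toContinuousLinearMap).hasFDerivAt).comp Z
    (hasFDerivAt_apply (𝕜 := ℝ) j Z)
  have h2 : HasFDerivAt (fun Z : Fin n → ℂ => (starRingEnd ℂ) (Z j))
      ((Complex.conjCLE.toContinuousLinearMap).comp (ContinuousLinearMap.proj j)) Z := h
  simp [Dv, h2.fderiv]

lemma Dv_Dv {f : (Fin n → ℂ) → ℂ} (hf : ContDiff ℝ (⊤ : ℕ∞) f) (v w Z : Fin n → ℂ) :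
    Dv n v (Dv n w f) Z = fderiv ℝ (fderiv ℝ f) Z v w := by
  have hdf : ContDiff ℝ (⊤ : ℕ∞) (fderiv ℝ f) := hf.fderiv_right (mod_cast le_top)
  have h2 : HasFDerivAt (fderiv ℝ f) (fderiv ℝ (fderiv ℝ f) Z) Z :=
    (hdf.differentiable (by simp) Z).hasFDerivAt
  have h3 : HasFDerivAt (Dv n w f)
      ((ContinuousLinearMap.apply ℝ ℂ w).comp (fderiv ℝ (fderiv ℝ f) Z)) Z :=
    ((ContinuousLinearMap.apply ℝ ℂ w).hasFDerivAt).comp Z h2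
  simp [Dv, h3.fderiv]

lemma Dv_comm {f : (Fin n → ℂ) → ℂ} (hf : ContDiff ℝ (⊤ : ℕ∞) f) (v w Z : Fin n → ℂ) :
    Dv n v (Dv n w f) Z = Dv n w (Dv n v f) Z := by
  rw [Dv_Dv hf, Dv_Dv hf]
  exact second_derivative_symmetric
    (fun y => (hf.differentiable (by simp) y).hasFDerivAt)
    ((((hf.fderiv_right (m := (⊤ : ℕ∞)) (mod_cast le_top)).differentiable (by simp)) Z).hasFDerivAt) v w

/-! ### Wirtinger derivative calculus -/

lemma wZ_eq (i : Fin n) (f : (Fin n → ℂ) → ℂ) (Z : Fin n → ℂ) :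
    wirtingerZ n i f Z
      = (1/2 : ℂ) * (Dv n (Pi.single i 1) f Z - Complex.I * Dv n (Pi.single i I) f Z) := rfl

lemma wB_eq (i : Fin n) (f : (Fin n → ℂ) → ℂ) (Z : Fin n → ℂ) :
    wirtingerZBar n i f Z
      = (1/2 : ℂ) * (Dv n (Pi.single i 1) f Z + Complex.I * Dv n (Pi.single i I) f Z) := rfl

lemma contDiff_wZ {f : (Fin n → ℂ) → ℂ} (hf : ContDiff ℝ (⊤ : ℕ∞) f) (i : Fin n) :
    ContDiff ℝ (⊤ : ℕ∞) (wirtingerZ n i f) := by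
  have h1 := contDiff_Dv hf (Pi.single i 1)
  have h2 := contDiff_Dv hf (Pi.single i I)
  exact contDiff_const.mul (h1.sub (contDiff_const.mul h2))

lemma contDiff_wB {f : (Fin n → ℂ) → ℂ} (hf : ContDiff ℝ (⊤ : ℕ∞) f) (i : Fin n) :
    ContDiff ℝ (⊤ : ℕ∞) (wirtingerZBar n i f) := by
  have h1 := contDiff_Dv hf (Pi.single i 1)
  have h2 := contDiff_Dv hf (Pi.single i I)
  exact contDiff_const.mul (h1.add (contDiff_const.mul h2))

lemma wZ_add {f g : (Fin n → ℂ) → ℂ} {Z : Fin n → ℂ} (hf : DifferentiableAt ℝ f Z)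
    (hg : DifferentiableAt ℝ g Z) (i : Fin n) :
    wirtingerZ n i (fun Z => f Z + g Z) Z = wirtingerZ n i f Z + wirtingerZ n i g Z := by
  simp only [wZ_eq, Dv_add hf hg]; ring

lemma wB_add {f g : (Fin n → ℂ) → ℂ} {Z : Fin n → ℂ} (hf : DifferentiableAt ℝ f Z)
    (hg : DifferentiableAt ℝ g Z) (i : Fin n) :
    wirtingerZBar n i (fun Z => f Z + g Z) Z = wirtingerZBar n i f Z + wirtingerZBar n i g Z := by
  simp only [wB_eq, Dv_add hf hg]; ring

lemma wZ_mul {f g : (Fin n → ℂ) → ℂ} {Z : Fin n → ℂ} (hf : DifferentiableAt ℝ f Z)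
    (hg : DifferentiableAt ℝ g Z) (i : Fin n) :
    wirtingerZ n i (fun Z => f Z * g Z) Z
      = wirtingerZ n i f Z * g Z + f Z * wirtingerZ n i g Z := by
  simp only [wZ_eq, Dv_mul hf hg]; ring

lemma wB_mul {f g : (Fin n → ℂ) → ℂ} {Z : Fin n → ℂ} (hf : DifferentiableAt ℝ f Z)
    (hg : DifferentiableAt ℝ g Z) (i : Fin n) :
    wirtingerZBar n i (fun Z => f Z * g Z) Z
      = wirtingerZBar n i f Z * g Z + f Z * wirtingerZBar n i g Z := by
  simp only [wB_eq, Dv_mul hf hg]; ring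

lemma wZ_const_mul {f : (Fin n → ℂ) → ℂ} {Z : Fin n → ℂ} (hf : DifferentiableAt ℝ f Z)
    (c : ℂ) (i : Fin n) :
    wirtingerZ n i (fun Z => c * f Z) Z = c * wirtingerZ n i f Z := by
  simp only [wZ_eq, Dv_const_mul hf]; ring

lemma wB_const_mul {f : (Fin n → ℂ) → ℂ} {Z : Fin n → ℂ} (hf : DifferentiableAt ℝ f Z)
    (c : ℂ) (i : Fin n) :
    wirtingerZBar n i (fun Z => c * f Z) Z = c * wirtingerZBar n i f Z := by
  simp only [wB_eq, Dv_const_mul hf]; ring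

lemma wZ_const (c : ℂ) (i : Fin n) (Z : Fin n → ℂ) :
    wirtingerZ n i (fun _ => c) Z = 0 := by
  simp [wZ_eq, Dv_const]

lemma wB_const (c : ℂ) (i : Fin n) (Z : Fin n → ℂ) :
    wirtingerZBar n i (fun _ => c) Z = 0 := by
  simp [wB_eq, Dv_const]

lemma wZ_sum {ι : Type*} (s : Finset ι) {g : ι → (Fin n → ℂ) → ℂ} {Z : Fin n → ℂ}
    (hg : ∀ j ∈ s, DifferentiableAt ℝ (g j) Z) (i : Fin n) :
    wirtingerZ n i (fun Z => ∑ j ∈ s, g j Z) Z = ∑ j ∈ s, wirtingerZ n i (g j) Z := by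
  simp only [wZ_eq, Dv_sum s hg]
  rw [Finset.mul_sum s _ Complex.I, ← Finset.sum_sub_distrib, Finset.mul_sum]

lemma wZ_coord (i j : Fin n) (Z : Fin n → ℂ) :
    wirtingerZ n i (fun Z => Z j) Z = if j = i then 1 else 0 := by
  simp only [wZ_eq, Dv_coord, Pi.single_apply]
  by_cases h : j = i <;> simp [h, Complex.I_mul_I] <;> norm_num

lemma wB_coord (i j : Fin n) (Z : Fin n → ℂ) :
    wirtingerZBar n i (fun Z => Z j) Z = 0 := by
  simp only [wB_eq, Dv_coord, Pi.single_apply]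
  by_cases h : j = i <;> simp [h, Complex.I_mul_I] <;> norm_num

lemma wZ_conj_coord (i j : Fin n) (Z : Fin n → ℂ) :
    wirtingerZ n i (fun Z => (starRingEnd ℂ) (Z j)) Z = 0 := by
  simp only [wZ_eq, Dv_conj_coord, Pi.single_apply]
  by_cases h : j = i <;> simp [h, Complex.I_mul_I] <;> norm_num

lemma wB_conj_coord (i j : Fin n) (Z : Fin n → ℂ) :
    wirtingerZBar n i (fun Z => (starRingEnd ℂ) (Z j)) Z = if j = i then 1 else 0 := by
  simp only [wB_eq, Dv_conj_coord, Pi.single_apply]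
  by_cases h : j = i <;> simp [h, Complex.I_mul_I] <;> norm_num

lemma Dv_wZ {f : (Fin n → ℂ) → ℂ} (hf : ContDiff ℝ (⊤ : ℕ∞) f) (j : Fin n) (v Z : Fin n → ℂ) :
    Dv n v (wirtingerZ n j f) Z
      = (1/2 : ℂ) * (Dv n v (Dv n (Pi.single j 1) f) Z
          - Complex.I * Dv n v (Dv n (Pi.single j I) f) Z) := by
  have h1 := dA (contDiff_Dv hf (Pi.single j 1)) Z
  have h2 := dA (contDiff_Dv hf (Pi.single j I)) Z
  have hw : wirtingerZ n j f = fun Z => (1/2 : ℂ) * (Dv n (Pi.single j 1) f Z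
      - Complex.I * Dv n (Pi.single j I) f Z) := rfl
  rw [hw, Dv_const_mul (by exact h1.sub (h2.const_mul _)),
    Dv_sub h1 (h2.const_mul _), Dv_const_mul h2]

lemma Dv_wB {f : (Fin n → ℂ) → ℂ} (hf : ContDiff ℝ (⊤ : ℕ∞) f) (j : Fin n) (v Z : Fin n → ℂ) :
    Dv n v (wirtingerZBar n j f) Z
      = (1/2 : ℂ) * (Dv n v (Dv n (Pi.single j 1) f) Z
          + Complex.I * Dv n v (Dv n (Pi.single j I) f) Z) := by
  have h1 := dA (contDiff_Dv hf (Pi.single j 1)) Z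
  have h2 := dA (contDiff_Dv hf (Pi.single j I)) Z
  have hw : wirtingerZBar n j f = fun Z => (1/2 : ℂ) * (Dv n (Pi.single j 1) f Z
      + Complex.I * Dv n (Pi.single j I) f Z) := rfl
  rw [hw, Dv_const_mul (by exact h1.add (h2.const_mul _)),
    Dv_add h1 (h2.const_mul _), Dv_const_mul h2]

lemma wB_wZ_comm {f : (Fin n → ℂ) → ℂ} (hf : ContDiff ℝ (⊤ : ℕ∞) f) (i j : Fin n) (Z : Fin n → ℂ) :
    wirtingerZBar n i (wirtingerZ n j f) Z = wirtingerZ n j (wirtingerZBar n i f) Z := by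
  rw [wB_eq, wZ_eq, Dv_wZ hf, Dv_wZ hf, Dv_wB hf, Dv_wB hf,
    Dv_comm hf (Pi.single i 1) (Pi.single j 1),
    Dv_comm hf (Pi.single i 1) (Pi.single j I),
    Dv_comm hf (Pi.single i I) (Pi.single j 1),
    Dv_comm hf (Pi.single i I) (Pi.single j I)]
  ring

lemma wZ_wZ_comm {f : (Fin n → ℂ) → ℂ} (hf : ContDiff ℝ (⊤ : ℕ∞) f) (i j : Fin n) (Z : Fin n → ℂ) :
    wirtingerZ n i (wirtingerZ n j f) Z = wirtingerZ n j (wirtingerZ n i f) Z := by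
  rw [wZ_eq, wZ_eq, Dv_wZ hf, Dv_wZ hf, Dv_wZ hf, Dv_wZ hf,
    Dv_comm hf (Pi.single i 1) (Pi.single j 1),
    Dv_comm hf (Pi.single i 1) (Pi.single j I),
    Dv_comm hf (Pi.single i I) (Pi.single j 1),
    Dv_comm hf (Pi.single i I) (Pi.single j I)]
  ring


/-! ### Generators: coordinates, conjugate coordinates, the Gaussian -/

lemma contDiff_coord (j : Fin n) : ContDiff ℝ (⊤ : ℕ∞) (fun Z : Fin n → ℂ => Z j) :=
  contDiff_apply ℝ ℂ j

lemma contDiff_conj_coord (j : Fin n) :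
    ContDiff ℝ (⊤ : ℕ∞) (fun Z : Fin n → ℂ => (starRingEnd ℂ) (Z j)) :=
  Complex.conjCLE.toContinuousLinearMap.contDiff.comp (contDiff_coord j)

lemma modelGauss_eq : modelGauss n = fun Z => Complex.exp
    (-((Real.pi : ℂ)/2) * ∑ i : Fin n, Z i * (starRingEnd ℂ) (Z i)) := by
  funext Z
  simp [modelGauss, Complex.mul_conj]

lemma contDiff_gauss : ContDiff ℝ (⊤ : ℕ∞) (modelGauss n) := by
  rw [modelGauss_eq]
  exact Complex.contDiff_exp.comp (contDiff_const.mul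
    (ContDiff.sum fun i _ => (contDiff_coord i).mul (contDiff_conj_coord i)))

lemma Dv_gauss (v Z : Fin n → ℂ) :
    Dv n v (modelGauss n) Z
      = (-((Real.pi : ℂ)/2) * ∑ i : Fin n,
          (Z i * (starRingEnd ℂ) (v i) + (starRingEnd ℂ) (Z i) * v i)) * modelGauss n Z := by
  have hterm : ∀ i : Fin n, HasFDerivAt (fun Z : Fin n → ℂ => Z i * (starRingEnd ℂ) (Z i))
      ((Z i) • ((Complex.conjCLE.toContinuousLinearMap).comp (ContinuousLinearMap.proj i))
        + ((starRingEnd ℂ) (Z i)) • (ContinuousLinearMap.proj i : (Fin n → ℂ) →L[ℝ] ℂ)) Z := by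
    intro i
    have h1 : HasFDerivAt (fun Z : Fin n → ℂ => Z i)
        (ContinuousLinearMap.proj i : (Fin n → ℂ) →L[ℝ] ℂ) Z := hasFDerivAt_apply i Z
    have h2 : HasFDerivAt (fun Z : Fin n → ℂ => (starRingEnd ℂ) (Z i))
        ((Complex.conjCLE.toContinuousLinearMap).comp
          (ContinuousLinearMap.proj i : (Fin n → ℂ) →L[ℝ] ℂ)) Z :=
      (Complex.conjCLE.toContinuousLinearMap.hasFDerivAt).comp Z h1
    exact h1.mul h2
  have hsum := HasFDerivAt.fun_sum (u := Finset.univ) (fun i _ => hterm i)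
  have hin := hsum.const_mul (-((Real.pi : ℂ)/2))
  have hexp := hin.cexp
  rw [modelGauss_eq, Dv, hexp.fderiv]
  simp only [ContinuousLinearMap.smul_apply, ContinuousLinearMap.coe_sum',
    Finset.sum_apply, ContinuousLinearMap.add_apply, ContinuousLinearMap.coe_comp',
    ContinuousLinearMap.proj_apply, Function.comp_apply,
    ContinuousLinearEquiv.coe_coe, Complex.conjCLE_apply, smul_eq_mul]
  ring

lemma wB_gauss (i : Fin n) (Z : Fin n → ℂ) :
    wirtingerZBar n i (modelGauss n) Z = -((Real.pi : ℂ)/2) * Z i * modelGauss n Z := by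
  have hs : ∀ c : ℂ, ∑ j : Fin n, (Z j * (starRingEnd ℂ) ((Pi.single i c : Fin n → ℂ) j)
      + (starRingEnd ℂ) (Z j) * (Pi.single i c : Fin n → ℂ) j)
      = Z i * (starRingEnd ℂ) c + (starRingEnd ℂ) (Z i) * c := by
    intro c
    rw [Fintype.sum_eq_single i]
    · simp
    · intro j h; simp [Pi.single_apply, h]
  rw [wB_eq, Dv_gauss, Dv_gauss, hs, hs]
  simp only [map_one, mul_one, Complex.conj_I]
  ring_nf
  rw [Complex.I_sq]
  ring

lemma wZ_gauss (i : Fin n) (Z : Fin n → ℂ) :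
    wirtingerZ n i (modelGauss n) Z
      = -((Real.pi : ℂ)/2) * (starRingEnd ℂ) (Z i) * modelGauss n Z := by
  have hs : ∀ c : ℂ, ∑ j : Fin n, (Z j * (starRingEnd ℂ) ((Pi.single i c : Fin n → ℂ) j)
      + (starRingEnd ℂ) (Z j) * (Pi.single i c : Fin n → ℂ) j)
      = Z i * (starRingEnd ℂ) c + (starRingEnd ℂ) (Z i) * c := by
    intro c
    rw [Fintype.sum_eq_single i]
    · simp
    · intro j h; simp [Pi.single_apply, h]
  rw [wZ_eq, Dv_gauss, Dv_gauss, hs, hs]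
  simp only [map_one, mul_one, Complex.conj_I]
  ring_nf
  rw [Complex.I_sq]
  ring

/-! ### Smoothness and linearity of `bOp`, `bPlusOp` -/

lemma bOp_eq (i : Fin n) (f : (Fin n → ℂ) → ℂ) :
    bOp n i f = fun Z => -2 * wirtingerZ n i f Z
      + (Real.pi : ℂ) * (starRingEnd ℂ) (Z i) * f Z := rfl

lemma bPlusOp_eq (i : Fin n) (f : (Fin n → ℂ) → ℂ) :
    bPlusOp n i f = fun Z => 2 * wirtingerZBar n i f Z + (Real.pi : ℂ) * Z i * f Z := rfl

lemma contDiff_bOp {f : (Fin n → ℂ) → ℂ} (hf : ContDiff ℝ (⊤ : ℕ∞) f) (i : Fin n) :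
    ContDiff ℝ (⊤ : ℕ∞) (bOp n i f) := by
  rw [bOp_eq]
  exact (contDiff_const.mul (contDiff_wZ hf i)).add
    ((contDiff_const.mul (contDiff_conj_coord i)).mul hf)

lemma contDiff_bPlusOp {f : (Fin n → ℂ) → ℂ} (hf : ContDiff ℝ (⊤ : ℕ∞) f) (i : Fin n) :
    ContDiff ℝ (⊤ : ℕ∞) (bPlusOp n i f) := by
  rw [bPlusOp_eq]
  exact (contDiff_const.mul (contDiff_wB hf i)).add
    ((contDiff_const.mul (contDiff_coord i)).mul hf)

lemma bOp_zero (i : Fin n) : bOp n i (fun _ => (0 : ℂ)) = fun _ => 0 := by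
  funext Z
  simp [bOp, wZ_const]

lemma bOp_const_mul {f : (Fin n → ℂ) → ℂ} (hf : ContDiff ℝ (⊤ : ℕ∞) f) (c : ℂ) (i : Fin n) :
    bOp n i (fun Z => c * f Z) = fun Z => c * bOp n i f Z := by
  funext Z
  simp only [bOp, wZ_const_mul (dA hf Z) c i]
  ring

lemma bOp_add {f g : (Fin n → ℂ) → ℂ} (hf : ContDiff ℝ (⊤ : ℕ∞) f) (hg : ContDiff ℝ (⊤ : ℕ∞) g) (i : Fin n) :
    bOp n i (fun Z => f Z + g Z) = fun Z => bOp n i f Z + bOp n i g Z := by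
  funext Z
  simp only [bOp, wZ_add (dA hf Z) (dA hg Z) i]
  ring

lemma bOp_sum {ι : Type*} (s : Finset ι) {g : ι → (Fin n → ℂ) → ℂ}
    (hg : ∀ i ∈ s, ContDiff ℝ (⊤ : ℕ∞) (g i)) (j : Fin n) :
    bOp n j (fun Z => ∑ i ∈ s, g i Z) = fun Z => ∑ i ∈ s, bOp n j (g i) Z := by
  funext Z
  simp only [bOp, wZ_sum s (fun i hi => dA (hg i hi) Z) j]
  rw [Finset.mul_sum, Finset.mul_sum, ← Finset.sum_add_distrib]

/-! ### Commutators -/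

lemma wB_bOp {f : (Fin n → ℂ) → ℂ} (hf : ContDiff ℝ (⊤ : ℕ∞) f) (i j : Fin n) (Z : Fin n → ℂ) :
    wirtingerZBar n i (bOp n j f) Z
      = -2 * wirtingerZBar n i (wirtingerZ n j f) Z
        + (Real.pi : ℂ) * (if j = i then 1 else 0) * f Z
        + (Real.pi : ℂ) * (starRingEnd ℂ) (Z j) * wirtingerZBar n i f Z := by
  have h1 : ContDiff ℝ (⊤ : ℕ∞) (fun Z => -2 * wirtingerZ n j f Z) :=
    contDiff_const.mul (contDiff_wZ hf j)
  have h2 : ContDiff ℝ (⊤ : ℕ∞) (fun Z : Fin n → ℂ => (Real.pi : ℂ) * (starRingEnd ℂ) (Z j)) :=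
    contDiff_const.mul (contDiff_conj_coord j)
  have h3 : ContDiff ℝ (⊤ : ℕ∞) (fun Z : Fin n → ℂ => (Real.pi : ℂ) * (starRingEnd ℂ) (Z j) * f Z) :=
    h2.mul hf
  rw [bOp_eq, wB_add (dA h1 Z) (dA h3 Z) i,
    wB_const_mul (dA (contDiff_wZ hf j) Z) (-2) i,
    wB_mul (dA h2 Z) (dA hf Z) i,
    wB_const_mul (dA (contDiff_conj_coord j) Z) (Real.pi : ℂ) i,
    wB_conj_coord]
  ring

lemma wZ_bPlusOp {f : (Fin n → ℂ) → ℂ} (hf : ContDiff ℝ (⊤ : ℕ∞) f) (i j : Fin n) (Z : Fin n → ℂ) :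
    wirtingerZ n j (bPlusOp n i f) Z
      = 2 * wirtingerZ n j (wirtingerZBar n i f) Z
        + (Real.pi : ℂ) * (if i = j then 1 else 0) * f Z
        + (Real.pi : ℂ) * Z i * wirtingerZ n j f Z := by
  have h1 : ContDiff ℝ (⊤ : ℕ∞) (fun Z => (2 : ℂ) * wirtingerZBar n i f Z) :=
    contDiff_const.mul (contDiff_wB hf i)
  have h2 : ContDiff ℝ (⊤ : ℕ∞) (fun Z : Fin n → ℂ => (Real.pi : ℂ) * Z i) :=
    contDiff_const.mul (contDiff_coord i)
  have h3 : ContDiff ℝ (⊤ : ℕ∞) (fun Z : Fin n → ℂ => (Real.pi : ℂ) * Z i * f Z) := h2.mul hf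
  rw [bPlusOp_eq, wZ_add (dA h1 Z) (dA h3 Z) j,
    wZ_const_mul (dA (contDiff_wB hf i) Z) 2 j,
    wZ_mul (dA h2 Z) (dA hf Z) j,
    wZ_const_mul (dA (contDiff_coord i) Z) (Real.pi : ℂ) j,
    wZ_coord]
  ring

lemma wZ_bOp {f : (Fin n → ℂ) → ℂ} (hf : ContDiff ℝ (⊤ : ℕ∞) f) (i j : Fin n) (Z : Fin n → ℂ) :
    wirtingerZ n i (bOp n j f) Z
      = -2 * wirtingerZ n i (wirtingerZ n j f) Z
        + (Real.pi : ℂ) * (starRingEnd ℂ) (Z j) * wirtingerZ n i f Z := by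
  have h1 : ContDiff ℝ (⊤ : ℕ∞) (fun Z => -2 * wirtingerZ n j f Z) :=
    contDiff_const.mul (contDiff_wZ hf j)
  have h2 : ContDiff ℝ (⊤ : ℕ∞) (fun Z : Fin n → ℂ => (Real.pi : ℂ) * (starRingEnd ℂ) (Z j)) :=
    contDiff_const.mul (contDiff_conj_coord j)
  have h3 : ContDiff ℝ (⊤ : ℕ∞) (fun Z : Fin n → ℂ => (Real.pi : ℂ) * (starRingEnd ℂ) (Z j) * f Z) :=
    h2.mul hf
  rw [bOp_eq, wZ_add (dA h1 Z) (dA h3 Z) i,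
    wZ_const_mul (dA (contDiff_wZ hf j) Z) (-2) i,
    wZ_mul (dA h2 Z) (dA hf Z) i,
    wZ_const_mul (dA (contDiff_conj_coord j) Z) (Real.pi : ℂ) i,
    wZ_conj_coord]
  ring

lemma bPlus_bOp_comm {f : (Fin n → ℂ) → ℂ} (hf : ContDiff ℝ (⊤ : ℕ∞) f) (i j : Fin n) :
    bPlusOp n i (bOp n j f)
      = fun Z => bOp n j (bPlusOp n i f) Z
          + (if i = j then 4 * (Real.pi : ℂ) else 0) * f Z := by
  funext Z
  have key : wirtingerZBar n i (wirtingerZ n j f) Z = wirtingerZ n j (wirtingerZBar n i f) Z :=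
    wB_wZ_comm hf i j Z
  show 2 * wirtingerZBar n i (bOp n j f) Z + (Real.pi : ℂ) * Z i * bOp n j f Z = _
  rw [wB_bOp hf i j Z]
  show _ = -2 * wirtingerZ n j (bPlusOp n i f) Z
      + (Real.pi : ℂ) * (starRingEnd ℂ) (Z j) * bPlusOp n i f Z
      + (if i = j then 4 * (Real.pi : ℂ) else 0) * f Z
  rw [wZ_bPlusOp hf i j Z, bOp_eq, bPlusOp_eq, key]
  by_cases h : i = j
  · subst h; simp only [eq_self_iff_true, if_true]; ring
  · rw [if_neg h, if_neg (fun hh => h hh.symm), if_neg h]; ring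

lemma bOp_bOp_comm {f : (Fin n → ℂ) → ℂ} (hf : ContDiff ℝ (⊤ : ℕ∞) f) (i j : Fin n) :
    bOp n i (bOp n j f) = bOp n j (bOp n i f) := by
  funext Z
  have key : wirtingerZ n i (wirtingerZ n j f) Z = wirtingerZ n j (wirtingerZ n i f) Z :=
    wZ_wZ_comm hf i j Z
  show -2 * wirtingerZ n i (bOp n j f) Z + (Real.pi : ℂ) * (starRingEnd ℂ) (Z i) * bOp n j f Z
      = -2 * wirtingerZ n j (bOp n i f) Z + (Real.pi : ℂ) * (starRingEnd ℂ) (Z j) * bOp n i f Z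
  rw [wZ_bOp hf i j Z, wZ_bOp hf j i Z, bOp_eq, bOp_eq, key]
  ring


/-! ### Monomials and the base eigenfunction -/

lemma contDiff_pow_coord (j : Fin n) (m : ℕ) :
    ContDiff ℝ (⊤ : ℕ∞) (fun Z : Fin n → ℂ => Z j ^ m) := (contDiff_coord j).pow m

lemma wB_pow_coord (i j : Fin n) (m : ℕ) (Z : Fin n → ℂ) :
    wirtingerZBar n i (fun Z => Z j ^ m) Z = 0 := by
  induction m with
  | zero =>
    have h : (fun Z : Fin n → ℂ => Z j ^ 0) = fun _ => (1 : ℂ) := by funext Z; simp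
    rw [h, wB_const]
  | succ m ih =>
    have h : (fun Z : Fin n → ℂ => Z j ^ (m + 1)) = fun Z => Z j * Z j ^ m := by
      funext Z; ring
    rw [h, wB_mul (dA (contDiff_coord j) Z) (dA (contDiff_pow_coord j m) Z), wB_coord, ih]
    ring

lemma contDiff_mono (β : Fin n → ℕ) (s : Finset (Fin n)) :
    ContDiff ℝ (⊤ : ℕ∞) (fun Z : Fin n → ℂ => ∏ j ∈ s, Z j ^ β j) := by
  classical
  induction s using Finset.induction_on with
  | empty => simp only [Finset.prod_empty]; exact contDiff_const
  | @insert a s ha ih =>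
    simp only [Finset.prod_insert ha]
    exact (contDiff_pow_coord a (β a)).mul ih

lemma wB_mono (β : Fin n → ℕ) (s : Finset (Fin n)) (i : Fin n) (Z : Fin n → ℂ) :
    wirtingerZBar n i (fun Z => ∏ j ∈ s, Z j ^ β j) Z = 0 := by
  classical
  induction s using Finset.induction_on with
  | empty => simp only [Finset.prod_empty]; exact wB_const 1 i Z
  | @insert a s ha ih =>
    simp only [Finset.prod_insert ha]
    rw [wB_mul (dA (contDiff_pow_coord a (β a)) Z) (dA (contDiff_mono β s) Z),
      wB_pow_coord, ih]
    ring

/-- The base function `z^β e^{-π|z|²/2}`. -/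
def f0 (n : ℕ) (β : Fin n → ℕ) : (Fin n → ℂ) → ℂ :=
  fun Z => (∏ i : Fin n, Z i ^ β i) * modelGauss n Z

lemma contDiff_f0 (β : Fin n → ℕ) : ContDiff ℝ (⊤ : ℕ∞) (f0 n β) :=
  (contDiff_mono β Finset.univ).mul contDiff_gauss

lemma bPlusOp_f0 (β : Fin n → ℕ) (i : Fin n) : bPlusOp n i (f0 n β) = fun _ => 0 := by
  funext Z
  show 2 * wirtingerZBar n i (f0 n β) Z + (Real.pi : ℂ) * Z i * f0 n β Z = 0
  have hw : wirtingerZBar n i (f0 n β) Z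
      = (∏ j : Fin n, Z j ^ β j) * (-((Real.pi : ℂ)/2) * Z i * modelGauss n Z) := by
    show wirtingerZBar n i (fun Z => (∏ j : Fin n, Z j ^ β j) * modelGauss n Z) Z = _
    rw [wB_mul (dA (contDiff_mono β Finset.univ) Z) (dA contDiff_gauss Z),
      wB_mono, wB_gauss]
    ring
  rw [hw]
  show _ + (Real.pi : ℂ) * Z i * ((∏ j : Fin n, Z j ^ β j) * modelGauss n Z) = 0
  ring

lemma modelL_f0 (β : Fin n → ℕ) : modelL n (f0 n β) = fun Z => (0 : ℂ) * f0 n β Z := by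
  funext Z
  show (∑ i : Fin n, bOp n i (bPlusOp n i (f0 n β)) Z) = 0 * f0 n β Z
  simp only [bPlusOp_f0, bOp_zero]
  simp

/-! ### Commutation with the model operator and the eigenvalue induction -/

lemma modelL_bOp {f : (Fin n → ℂ) → ℂ} (hf : ContDiff ℝ (⊤ : ℕ∞) f) (j : Fin n) :
    modelL n (bOp n j f)
      = fun Z => bOp n j (modelL n f) Z + 4 * (Real.pi : ℂ) * bOp n j f Z := by
  funext Z
  have hL : ∀ i : Fin n, bOp n i (bPlusOp n i (bOp n j f)) Z
      = bOp n j (bOp n i (bPlusOp n i f)) Z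
        + (if i = j then 4 * (Real.pi : ℂ) else 0) * bOp n i f Z := by
    intro i
    rw [bPlus_bOp_comm hf i j,
      bOp_add (contDiff_bOp (contDiff_bPlusOp hf i) j) (contDiff_const.mul hf) i,
      bOp_const_mul hf _ i,
      bOp_bOp_comm (contDiff_bPlusOp hf i) i j]
  show (∑ i : Fin n, bOp n i (bPlusOp n i (bOp n j f)) Z) = _
  rw [Finset.sum_congr rfl (fun i _ => hL i), Finset.sum_add_distrib]
  have h1 : (∑ i : Fin n, bOp n j (bOp n i (bPlusOp n i f)) Z) = bOp n j (modelL n f) Z := by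
    have h2 : bOp n j (modelL n f)
        = fun Z => ∑ i : Fin n, bOp n j (bOp n i (bPlusOp n i f)) Z := by
      have : modelL n f = fun Z => ∑ i : Fin n, bOp n i (bPlusOp n i f) Z := rfl
      rw [this, bOp_sum Finset.univ (fun i _ => contDiff_bOp (contDiff_bPlusOp hf i) i) j]
    rw [h2]
  have h3 : (∑ i : Fin n, (if i = j then 4 * (Real.pi : ℂ) else 0) * bOp n i f Z)
      = 4 * (Real.pi : ℂ) * bOp n j f Z := by
    rw [Finset.sum_congr rfl
      (fun i _ => by rw [ite_mul, zero_mul] :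
        ∀ i ∈ Finset.univ, (if i = j then 4 * (Real.pi : ℂ) else 0) * bOp n i f Z
          = if i = j then 4 * (Real.pi : ℂ) * bOp n i f Z else 0)]
    simp
  rw [h1, h3]

lemma modelL_bOp_eig {f : (Fin n → ℂ) → ℂ} {c : ℂ} (hf : ContDiff ℝ (⊤ : ℕ∞) f)
    (hc : modelL n f = fun Z => c * f Z) (j : Fin n) :
    modelL n (bOp n j f) = fun Z => (c + 4 * (Real.pi : ℂ)) * bOp n j f Z := by
  rw [modelL_bOp hf j, hc, bOp_const_mul hf c j]
  funext Z
  ring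

lemma modelL_bOp_iter {f : (Fin n → ℂ) → ℂ} {c : ℂ} (hf : ContDiff ℝ (⊤ : ℕ∞) f)
    (hc : modelL n f = fun Z => c * f Z) (j : Fin n) (k : ℕ) :
    ContDiff ℝ (⊤ : ℕ∞) ((bOp n j)^[k] f) ∧
      modelL n ((bOp n j)^[k] f)
        = fun Z => (c + 4 * (Real.pi : ℂ) * k) * (bOp n j)^[k] f Z := by
  induction k with
  | zero =>
    refine ⟨hf, ?_⟩
    simp only [Function.iterate_zero, id_eq, Nat.cast_zero]
    rw [hc]
    funext Z
    ring
  | succ k ih =>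
    rw [Function.iterate_succ_apply']
    refine ⟨contDiff_bOp ih.1 j, ?_⟩
    rw [modelL_bOp_eig ih.1 ih.2 j]
    funext Z
    push_cast
    ring

lemma modelL_foldr {f : (Fin n → ℂ) → ℂ} {c : ℂ} (hf : ContDiff ℝ (⊤ : ℕ∞) f)
    (hc : modelL n f = fun Z => c * f Z) (α : Fin n → ℕ) (L : List (Fin n)) :
    ContDiff ℝ (⊤ : ℕ∞) ((L.foldr (fun i T => (bOp n i)^[α i] ∘ T) id) f) ∧
      modelL n ((L.foldr (fun i T => (bOp n i)^[α i] ∘ T) id) f)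
        = fun Z => (c + 4 * (Real.pi : ℂ) * ((L.map α).sum : ℕ))
            * (L.foldr (fun i T => (bOp n i)^[α i] ∘ T) id) f Z := by
  induction L with
  | nil =>
    refine ⟨hf, ?_⟩
    simp only [List.foldr_nil, id_eq, List.map_nil, List.sum_nil, Nat.cast_zero]
    rw [hc]
    funext Z
    ring
  | cons a L ih =>
    obtain ⟨h1, h2⟩ := ih
    obtain ⟨h3, h4⟩ := modelL_bOp_iter h1 h2 a (α a)
    simp only [List.foldr_cons, Function.comp_apply]
    refine ⟨h3, ?_⟩
    rw [h4]
    funext Z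
    simp only [List.map_cons, List.sum_cons]
    push_cast
    ring

end ModelAux


/-- For all multi-indices `α, β ∈ ℕⁿ`, the function
`E_{α,β} = b^α (z^β e^{-π|z|²/2})` satisfies `𝓛 E_{α,β} = 4π|α| E_{α,β}`. -/
theorem modelL_eigFun_eq (n : ℕ) (hn : 1 ≤ n) (α β : Fin n → ℕ) (Z : Fin n → ℂ) :
    modelL n (eigFun n α β) Z =
      (4 * (Real.pi : ℂ) * ((∑ i : Fin n, α i : ℕ) : ℂ)) * eigFun n α β Z := by
  have h := ModelAux.modelL_foldr (ModelAux.contDiff_f0 (n := n) β) (ModelAux.modelL_f0 β)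
    α (List.finRange n)
  have he : eigFun n α β
      = (List.finRange n).foldr (fun i T => (bOp n i)^[α i] ∘ T) id (ModelAux.f0 n β) := rfl
  rw [he, h.2, Fin.sum_univ_def]
  push_cast
  ring
end
end

section
/- Evaluation of iterated creation operators at the origin: let k ∈ ℕ, let G : ℝ^{2n} → ℂ be a homogeneous polynomial of degree k in the real variables Z, and let α ∈ ℕ^n. Consider the function b^α(G·𝓟(·,0)) obtained by applying b^α to Z ↦ G(Z)𝓟(Z,0). Its value at Z = 0 equals 0 if |α| ≠ k, and equals (−2)^k · ∂^α G/∂z^α (a constant, since |α| = k = deg G) if |α| = k. -/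
open MeasureTheory Complex MvPolynomial

noncomputable section

/-- Evaluation of a complex polynomial in the 2n real coordinates of `Z ∈ ℝ^{2n}`,
encoded as a polynomial in the variables `z` (inl block) and `z̄` (inr block). -/
def evalPolyZ (n : ℕ) (P : MvPolynomial (Fin n ⊕ Fin n) ℂ) (Z : Fin n → ℂ) : ℂ :=
  MvPolynomial.eval (Sum.elim Z fun j => (starRingEnd ℂ) (Z j)) P

/-- The iterated holomorphic derivative `∂^α/∂z^α` on polynomials. -/
def pderivZPow (n : ℕ) (α : Fin n → ℕ) (P : MvPolynomial (Fin n ⊕ Fin n) ℂ) :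
    MvPolynomial (Fin n ⊕ Fin n) ℂ :=
  (List.finRange n).foldr (fun i Q => (MvPolynomial.pderiv (Sum.inl i))^[α i] Q) P

/-!
Multiplication by the Gaussian `𝓟(·,0) = e^{-π|z|²/2}` intertwines `b_i` with the operator
`bPoly i = -2 ∂/∂z_i + 2π z̄_i` on polynomials in `z, z̄`, so the value at `0` is the constant
coefficient of the polynomial obtained by applying these operators to `G`. On monomials free of `z̄` the multiplication by `z̄_i` contributes nothing
and `∂/∂z_i` keeps such monomials free of `z̄`; hence that coefficient is `(-2)^{|α|}` times the
constant coefficient of `∂^α G`, which vanishes unless `|α| = deg G = k`.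
-/

section EvalPolyZ

variable (n : ℕ)

@[simp] lemma evalPolyZ_C (a : ℂ) : evalPolyZ n (C a) = fun _ => a := by
  ext; simp [evalPolyZ]

@[simp] lemma evalPolyZ_add (p q : MvPolynomial (Fin n ⊕ Fin n) ℂ) :
    evalPolyZ n (p + q) = fun Z => evalPolyZ n p Z + evalPolyZ n q Z := by
  ext; simp [evalPolyZ]

@[simp] lemma evalPolyZ_mul (p q : MvPolynomial (Fin n ⊕ Fin n) ℂ) :
    evalPolyZ n (p * q) = fun Z => evalPolyZ n p Z * evalPolyZ n q Z := by
  ext; simp [evalPolyZ]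

@[simp] lemma evalPolyZ_X_inl (j : Fin n) : evalPolyZ n (X (Sum.inl j)) = fun Z => Z j := by
  ext; simp [evalPolyZ]

@[simp] lemma evalPolyZ_X_inr (j : Fin n) :
    evalPolyZ n (X (Sum.inr j)) = fun Z => (starRingEnd ℂ) (Z j) := by
  ext; simp [evalPolyZ]

end EvalPolyZ

section Wirtinger

variable {n : ℕ} (i : Fin n) {f g : (Fin n → ℂ) → ℂ} {Z : Fin n → ℂ}

lemma wirtingerZ_add (hf : DifferentiableAt ℝ f Z) (hg : DifferentiableAt ℝ g Z) :
    wirtingerZ n i (fun W => f W + g W) Z = wirtingerZ n i f Z + wirtingerZ n i g Z := by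
  rw [wirtingerZ, fderiv_fun_add hf hg]
  simp only [wirtingerZ, add_apply]
  ring

lemma wirtingerZ_mul (hf : DifferentiableAt ℝ f Z) (hg : DifferentiableAt ℝ g Z) :
    wirtingerZ n i (fun W => f W * g W) Z =
      wirtingerZ n i f Z * g Z + f Z * wirtingerZ n i g Z := by
  rw [wirtingerZ, fderiv_fun_mul hf hg]
  simp only [wirtingerZ, add_apply, smul_apply, smul_eq_mul]
  ring

lemma wirtingerZ_const (a : ℂ) : wirtingerZ n i (fun _ => a) Z = 0 := by
  simp [wirtingerZ]

lemma wirtingerZ_cexp (hf : DifferentiableAt ℝ f Z) :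
    wirtingerZ n i (fun W => Complex.exp (f W)) Z = Complex.exp (f Z) * wirtingerZ n i f Z := by
  simp only [wirtingerZ, hf.hasFDerivAt.cexp.fderiv, smul_apply, smul_eq_mul]
  ring

lemma wirtingerZ_apply (j : Fin n) :
    wirtingerZ n i (fun W => W j) Z = if j = i then 1 else 0 := by
  have h : fderiv ℝ (fun W : Fin n → ℂ => W j) Z = ContinuousLinearMap.proj j :=
    (ContinuousLinearMap.proj (R := ℝ) (φ := fun _ : Fin n => ℂ) j).fderiv
  rw [wirtingerZ, h]
  split_ifs with hji <;> simp [hji]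
  norm_num

lemma wirtingerZ_conj_apply (j : Fin n) :
    wirtingerZ n i (fun W => (starRingEnd ℂ) (W j)) Z = 0 := by
  have h : fderiv ℝ (fun W : Fin n → ℂ => (starRingEnd ℂ) (W j)) Z =
      Complex.conjCLE.toContinuousLinearMap.comp (ContinuousLinearMap.proj j) :=
    (Complex.conjCLE.toContinuousLinearMap.comp
      (ContinuousLinearMap.proj (R := ℝ) (φ := fun _ : Fin n => ℂ) j)).fderiv
  rw [wirtingerZ, h]
  by_cases hji : j = i <;> simp [hji]

lemma differentiable_evalPolyZ (Q : MvPolynomial (Fin n ⊕ Fin n) ℂ) :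
    Differentiable ℝ (evalPolyZ n Q) := by
  induction Q using MvPolynomial.induction_on with
  | C a => simp
  | add p q hp hq => rw [evalPolyZ_add]; exact hp.add hq
  | mul_X p j hp =>
    cases j with
    | inl j => rw [evalPolyZ_mul, evalPolyZ_X_inl]; exact hp.mul (differentiable_apply j)
    | inr j => rw [evalPolyZ_mul, evalPolyZ_X_inr]; exact hp.mul (differentiable_apply j).star

lemma wirtingerZ_evalPolyZ (Q : MvPolynomial (Fin n ⊕ Fin n) ℂ) :
    wirtingerZ n i (evalPolyZ n Q) Z = evalPolyZ n (pderiv (Sum.inl i) Q) Z := by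
  induction Q using MvPolynomial.induction_on with
  | C a => simpa [evalPolyZ] using wirtingerZ_const i a
  | add p q hp hq =>
    rw [evalPolyZ_add,
      wirtingerZ_add i (differentiable_evalPolyZ p Z) (differentiable_evalPolyZ q Z), hp, hq]
    simp
  | mul_X p j hp =>
    rw [evalPolyZ_mul,
      wirtingerZ_mul i (differentiable_evalPolyZ p Z) (differentiable_evalPolyZ _ Z), hp]
    cases j with
    | inl j =>
      by_cases hji : j = i <;> simp [wirtingerZ_apply, hji, evalPolyZ] <;> ring
    | inr j => simp [wirtingerZ_conj_apply, mul_comm]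

def modelGaussExponent (n : ℕ) : MvPolynomial (Fin n ⊕ Fin n) ℂ :=
  C (-((Real.pi : ℂ) / 2)) * ∑ j : Fin n, X (Sum.inl j) * X (Sum.inr j)

lemma modelGauss_eq_cexp_evalPolyZ (n : ℕ) :
    modelGauss n = fun Z => Complex.exp (evalPolyZ n (modelGaussExponent n) Z) := by
  ext Z
  simp [modelGauss, modelGaussExponent, evalPolyZ, Complex.mul_conj]

lemma differentiable_modelGauss (n : ℕ) : Differentiable ℝ (modelGauss n) := by
  rw [modelGauss_eq_cexp_evalPolyZ]
  exact (differentiable_evalPolyZ _).cexp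

lemma wirtingerZ_modelGauss :
    wirtingerZ n i (modelGauss n) Z =
      -((Real.pi : ℂ) / 2) * (starRingEnd ℂ) (Z i) * modelGauss n Z := by
  rw [modelGauss_eq_cexp_evalPolyZ, wirtingerZ_cexp i (differentiable_evalPolyZ _ Z),
    wirtingerZ_evalPolyZ]
  have hexp : evalPolyZ n (pderiv (Sum.inl i) (modelGaussExponent n)) Z =
      -((Real.pi : ℂ) / 2) * (starRingEnd ℂ) (Z i) := by
    simp [modelGaussExponent, evalPolyZ, Pi.single_apply]
  rw [hexp]
  ring

end Wirtinger

def bPoly (n : ℕ) (i : Fin n) (Q : MvPolynomial (Fin n ⊕ Fin n) ℂ) :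
    MvPolynomial (Fin n ⊕ Fin n) ℂ :=
  (-2 : ℂ) • pderiv (Sum.inl i) Q + (2 * Real.pi : ℂ) • (X (Sum.inr i) * Q)

lemma semiconj_bOp_bPoly (n : ℕ) (i : Fin n) :
    Function.Semiconj (fun Q Z => evalPolyZ n Q Z * modelGauss n Z) (bPoly n i) (bOp n i) := by
  intro Q
  ext Z
  rw [bOp, wirtingerZ_mul i (differentiable_evalPolyZ Q Z) (differentiable_modelGauss n Z),
    wirtingerZ_evalPolyZ, wirtingerZ_modelGauss]
  simp [bPoly, evalPolyZ]
  ring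

lemma foldr_comp_apply_of_semiconj {ι α β : Type*} {Φ : α → β} {S : ι → α → α} {T : ι → β → β}
    (h : ∀ i, Function.Semiconj Φ (S i) (T i)) (l : List ι) (a : α) :
    l.foldr (fun i F => T i ∘ F) id (Φ a) = Φ (l.foldr S a) := by
  induction l with
  | nil => rfl
  | cons i l ih => exact (congrArg (T i) ih).trans ((h i) _).symm

section PDeriv

variable {σ ι R : Type*} [CommSemiring R]

lemma exists_coeff_ne_zero_of_coeff_pderiv_iterate_ne_zero {j : σ} {m : ℕ} {Q : MvPolynomial σ R}
    {d : σ →₀ ℕ} (h : coeff d ((pderiv j)^[m] Q) ≠ 0) :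
    ∃ e : σ →₀ ℕ, e.degree = d.degree + m ∧ coeff e Q ≠ 0 := by
  induction m generalizing d with
  | zero => exact ⟨d, rfl, h⟩
  | succ m ih =>
    rw [Function.iterate_succ_apply', coeff_pderiv] at h
    obtain ⟨e, he, hQ⟩ := ih (left_ne_zero_of_mul h)
    refine ⟨e, ?_, hQ⟩
    rw [he, map_add, Finsupp.degree_single]
    ring

lemma exists_coeff_ne_zero_of_coeff_foldr_pderiv_ne_zero (v : ι → σ) (α : ι → ℕ) (l : List ι)
    {Q : MvPolynomial σ R} {d : σ →₀ ℕ}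
    (h : coeff d (l.foldr (fun i P => (pderiv (v i))^[α i] P) Q) ≠ 0) :
    ∃ e : σ →₀ ℕ, e.degree = d.degree + (l.map α).sum ∧ coeff e Q ≠ 0 := by
  induction l generalizing d with
  | nil => exact ⟨d, by simp, h⟩
  | cons i l ih =>
    obtain ⟨e', he', hP⟩ := exists_coeff_ne_zero_of_coeff_pderiv_iterate_ne_zero h
    obtain ⟨e, he, hQ⟩ := ih hP
    refine ⟨e, ?_, hQ⟩
    rw [he, he', List.map_cons, List.sum_cons]
    ring

end PDeriv

section HolCoeff

variable {n : ℕ}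

def HolCoeffEq (R S : MvPolynomial (Fin n ⊕ Fin n) ℂ) (c : ℂ) : Prop :=
  ∀ d : (Fin n ⊕ Fin n) →₀ ℕ, (∀ j, d (Sum.inr j) = 0) → coeff d R = c * coeff d S

lemma HolCoeffEq.refl (R : MvPolynomial (Fin n ⊕ Fin n) ℂ) : HolCoeffEq R R 1 :=
  fun _ _ => (one_mul _).symm

lemma coeff_bPoly {i : Fin n} {d : (Fin n ⊕ Fin n) →₀ ℕ} (hd : d (Sum.inr i) = 0)
    (Q : MvPolynomial (Fin n ⊕ Fin n) ℂ) :
    coeff d (bPoly n i Q) = -2 * coeff d (pderiv (Sum.inl i) Q) := by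
  simp [bPoly, coeff_X_mul', hd]

lemma HolCoeffEq.bPoly_pderiv {R S : MvPolynomial (Fin n ⊕ Fin n) ℂ} {c : ℂ}
    (h : HolCoeffEq R S c) (i : Fin n) :
    HolCoeffEq (bPoly n i R) (pderiv (Sum.inl i) S) (-2 * c) := by
  intro d hd
  have hd' : ∀ j, (d + Finsupp.single (Sum.inl i) 1 : (Fin n ⊕ Fin n) →₀ ℕ) (Sum.inr j) = 0 :=
    fun j => by simp [hd j]
  rw [coeff_bPoly (hd i), coeff_pderiv, coeff_pderiv, h _ hd']
  ring

lemma HolCoeffEq.iterate_bPoly_pderiv {R S : MvPolynomial (Fin n ⊕ Fin n) ℂ} {c : ℂ}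
    (h : HolCoeffEq R S c) (i : Fin n) (m : ℕ) :
    HolCoeffEq ((bPoly n i)^[m] R) ((pderiv (Sum.inl i))^[m] S) ((-2) ^ m * c) := by
  induction m with
  | zero => simpa using h
  | succ m ih =>
    rw [Function.iterate_succ_apply', Function.iterate_succ_apply', pow_succ', mul_assoc]
    exact ih.bPoly_pderiv i

lemma HolCoeffEq.foldr_bPoly_pderiv {R S : MvPolynomial (Fin n ⊕ Fin n) ℂ} {c : ℂ}
    (h : HolCoeffEq R S c) (α : Fin n → ℕ) (l : List (Fin n)) :
    HolCoeffEq (l.foldr (fun i Q => (bPoly n i)^[α i] Q) R)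
      (l.foldr (fun i Q => (pderiv (Sum.inl i))^[α i] Q) S) ((-2) ^ (l.map α).sum * c) := by
  induction l with
  | nil => simpa using h
  | cons i l ih =>
    rw [List.foldr_cons, List.foldr_cons, List.map_cons, List.sum_cons, pow_add, mul_assoc]
    exact ih.iterate_bPoly_pderiv i (α i)

end HolCoeff

lemma modelP_zero_right (n : ℕ) (Z : Fin n → ℂ) : modelP n Z 0 = modelGauss n Z := by
  simp [modelP, modelGauss]

lemma evalPolyZ_mul_modelGauss_zero (n : ℕ) (Q : MvPolynomial (Fin n ⊕ Fin n) ℂ) :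
    evalPolyZ n Q 0 * modelGauss n 0 = coeff 0 Q := by
  simp [evalPolyZ, modelGauss, ← Pi.zero_def, eval_zero, constantCoeff_eq]

theorem bPow_homogeneous_eval_zero_general (n : ℕ) (k : ℕ)
    (G : MvPolynomial (Fin n ⊕ Fin n) ℂ) (hG : G.IsHomogeneous k) (α : Fin n → ℕ) :
    bPow n α (fun Z => evalPolyZ n G Z * modelP n Z 0) 0 =
      if (∑ i : Fin n, α i) = k then
        (-2 : ℂ)^k * MvPolynomial.eval (fun _ => (0 : ℂ)) (pderivZPow n α G)
      else 0 := by
  simp only [modelP_zero_right]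
  rw [bPow, foldr_comp_apply_of_semiconj (fun i => (semiconj_bOp_bPoly n i).iterate_right (α i))]
  dsimp only
  rw [evalPolyZ_mul_modelGauss_zero,
    (HolCoeffEq.refl G).foldr_bPoly_pderiv α (List.finRange n) 0 (by simp), ← Fin.sum_univ_def,
    mul_one, eval_zero', constantCoeff_eq, ← pderivZPow]
  split_ifs with hk
  · rw [hk]
  · suffices hzero : coeff 0 (pderivZPow n α G) = 0 by rw [hzero, mul_zero]
    by_contra hne
    obtain ⟨e, he, hGe⟩ := exists_coeff_ne_zero_of_coeff_foldr_pderiv_ne_zero Sum.inl α _ hne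
    rw [map_zero, zero_add, ← Fin.sum_univ_def] at he
    exact hGe (hG.coeff_eq_zero (he ▸ hk))

/-- Evaluation of iterated creation operators at the origin:
for `G` homogeneous of degree `k`, the value of `b^α(G·𝓟(·,0))` at `0` is `0` when
`|α| ≠ k`, and equals `(-2)^k ∂^α G/∂z^α` when `|α| = k`. -/
theorem bPow_homogeneous_eval_zero (n : ℕ) (hn : 1 ≤ n) (k : ℕ)
    (G : MvPolynomial (Fin n ⊕ Fin n) ℂ) (hG : G.IsHomogeneous k) (α : Fin n → ℕ) :
    bPow n α (fun Z => evalPolyZ n G Z * modelP n Z 0) 0 =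
      if (∑ i : Fin n, α i) = k then
        (-2 : ℂ)^k * MvPolynomial.eval (fun _ => (0 : ℂ)) (pderivZPow n α G)
      else 0 :=
  bPow_homogeneous_eval_zero_general n k G hG α
end
end

section
/- Composition of linear kernels (the computation underlying the coefficient C₁ of the Berezin-Toeplitz product, cf. (4.48)/(7.1.11)): let a, b, c, d ∈ ℂ^n and define the linear polynomials h(Z,Z′) = Σ_{i=1}^n (a_i z_i + b_i·conj(z′_i)) and h′(Z,Z′) = Σ_{i=1}^n (c_i z_i + d_i·conj(z′_i)) on ℝ^{2n} × ℝ^{2n}. Then ∫_{ℝ^{2n}} h(0,Y) 𝓟(0,Y) h′(Y,0) 𝓟(Y,0) dY = (1/π) Σ_{i=1}^n b_i c_i; that is, the kernel-calculus value 𝒦[h,h′](0,0) equals (1/π) Σ_i b_i c_i. -/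
open MeasureTheory Complex MvPolynomial

noncomputable section

/-! At the origin the two kernels multiply to the Gaussian `∏ₖ exp(-π|yₖ|²)` on `ℂⁿ`, so the
integral is the bilinear form `Σᵢⱼ bᵢ cⱼ ∫ ȳᵢ yⱼ ∏ₖ exp(-π|yₖ|²)`. By Fubini each of these
moments is a product of one-variable integrals: for `i ≠ j` one factor is the first moment of an
even Gaussian, hence zero, and for `i = j` the only nontrivial factor is
`∫_ℂ |z|² exp(-π|z|²) = 1/π`, the other ones being `∫_ℂ exp(-π|z|²) = 1`. -/

open Real ComplexConjugate

namespace ModelKernel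

def gauss (z : ℂ) : ℂ := cexp (-π * normSq z)

lemma gauss_neg (z : ℂ) : gauss (-z) = gauss z := by
  simp [gauss]

lemma normSq_mul_gauss_eq_ofReal (z : ℂ) :
    (normSq z : ℂ) * gauss z = ((‖z‖ ^ (2 : ℝ) * rexp (-π * ‖z‖ ^ (2 : ℝ)) : ℝ) : ℂ) := by
  simp [gauss, normSq_eq_norm_sq]

lemma continuous_gauss : Continuous gauss := by
  unfold gauss; fun_prop

lemma integral_gauss : ∫ z, gauss z = 1 := by
  simpa [gauss, normSq_eq_norm_sq] using
    GaussianFourier.integral_cexp_neg_mul_sq_norm (V := ℂ) (b := π) (by simpa using pi_pos)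

lemma integral_normSq_mul_gauss : ∫ z, (normSq z : ℂ) * gauss z = (π : ℂ)⁻¹ := by
  simp_rw [normSq_mul_gauss_eq_ofReal]
  rw [integral_complex_ofReal,
    Complex.integral_rpow_mul_exp_neg_mul_rpow (by norm_num : (1 : ℝ) ≤ 2)
      (by norm_num : (-2 : ℝ) < 2) pi_pos]
  norm_num
  field_simp

lemma integrable_gauss : Integrable gauss :=
  .of_integral_ne_zero (by simp [integral_gauss])

lemma integrable_normSq_mul_gauss : Integrable fun z => (normSq z : ℂ) * gauss z :=
  .of_integral_ne_zero (by simp [integral_normSq_mul_gauss, pi_ne_zero])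

variable {f : ℂ → ℂ}

lemma integrable_mul_gauss (hf : Continuous f) (hf_le : ∀ z, ‖f z‖ ≤ ‖z‖) :
    Integrable fun z => f z * gauss z := by
  refine (integrable_gauss.norm.add integrable_normSq_mul_gauss.norm).mono'
    (hf.mul continuous_gauss).aestronglyMeasurable (.of_forall fun z => ?_)
  have h1 : ‖f z‖ ≤ 1 + ‖(normSq z : ℂ)‖ := by
    rw [normSq_eq_norm_sq]
    push_cast
    rw [norm_pow, Complex.norm_real, norm_norm]
    nlinarith [hf_le z, sq_nonneg (‖z‖ - 1)]
  simp only [Pi.add_apply, norm_mul, ← one_add_mul]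
  gcongr

lemma integral_mul_gauss_of_odd (hodd : ∀ z, f (-z) = -f z) :
    ∫ z, f z * gauss z = 0 := by
  have h := integral_neg_eq_self (fun z => f z * gauss z) volume
  simp only [hodd, gauss_neg, neg_mul, integral_neg] at h
  linear_combination -h / 2

section Moments

variable {ι : Type*} [DecidableEq ι]

def momentFactor (i j k : ι) (y : ℂ) : ℂ :=
  (if k = i then conj y else 1) * (if k = j then y else 1) * gauss y

lemma prod_momentFactor [Fintype ι] (i j : ι) (Y : ι → ℂ) :
    ∏ k, momentFactor i j k (Y k) = conj (Y i) * Y j * ∏ k, gauss (Y k) := by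
  simp only [momentFactor, Finset.prod_mul_distrib, Finset.prod_ite_eq', Finset.mem_univ, if_true]

lemma integrable_momentFactor (i j k : ι) : Integrable (momentFactor i j k) := by
  unfold momentFactor
  split_ifs
  · simpa [← normSq_eq_conj_mul_self] using integrable_normSq_mul_gauss
  · simpa using integrable_mul_gauss continuous_conj fun z => (RCLike.norm_conj z).le
  · simpa using integrable_mul_gauss continuous_id fun z => le_rfl
  · simpa using integrable_gauss

lemma integral_momentFactor (i j k : ι) :
    ∫ y, momentFactor i j k y =
      if k = i ∧ k = j then (π : ℂ)⁻¹ else if k = i ∨ k = j then 0 else 1 := by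
  rcases eq_or_ne k i with rfl | hki <;> rcases eq_or_ne k j with rfl | hkj <;>
    simp only [momentFactor, if_pos, if_neg, *, true_or, or_true, and_true, and_false,
      or_self, not_false_eq_true, one_mul, mul_one]
  · simpa [← normSq_eq_conj_mul_self] using integral_normSq_mul_gauss
  · exact integral_mul_gauss_of_odd fun z => map_neg conj z
  · exact integral_mul_gauss_of_odd fun z => rfl
  · exact integral_gauss

lemma integrable_conj_mul_mul_prod_gauss [Fintype ι] (i j : ι) :
    Integrable fun Y : ι → ℂ => conj (Y i) * Y j * ∏ k, gauss (Y k) := by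
  simpa only [prod_momentFactor, volume_pi] using
    Integrable.fintype_prod (f := momentFactor i j) (integrable_momentFactor i j)

lemma integral_conj_mul_mul_prod_gauss [Fintype ι] (i j : ι) :
    ∫ Y : ι → ℂ, conj (Y i) * Y j * ∏ k, gauss (Y k) = if i = j then (π : ℂ)⁻¹ else 0 := by
  simp_rw [← prod_momentFactor, integral_fintype_prod_volume_eq_prod, integral_momentFactor]
  split_ifs with hij
  · subst hij
    rw [Fintype.prod_eq_single i fun k hk => by simp [hk]]
    simp
  · exact Finset.prod_eq_zero (Finset.mem_univ i) (by simp [hij])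

lemma integral_sum_mul_conj_mul_sum_mul_prod_gauss [Fintype ι] (u v : ι → ℂ) :
    ∫ Y : ι → ℂ, (∑ i, u i * conj (Y i)) * (∑ j, v j * Y j) * ∏ k, gauss (Y k) =
      (π : ℂ)⁻¹ * ∑ i, u i * v i := by
  have hexpand : ∀ Y : ι → ℂ, (∑ i, u i * conj (Y i)) * (∑ j, v j * Y j) * ∏ k, gauss (Y k) =
      ∑ i, ∑ j, u i * v j * (conj (Y i) * Y j * ∏ k, gauss (Y k)) := by
    intro Y
    rw [Finset.sum_mul_sum]
    simp_rw [Finset.sum_mul]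
    exact Finset.sum_congr rfl fun i _ => Finset.sum_congr rfl fun j _ => by ring
  have hint (i j : ι) := (integrable_conj_mul_mul_prod_gauss i j).const_mul (u i * v j)
  simp_rw [hexpand]
  rw [integral_finsetSum _ fun i _ => integrable_finsetSum _ fun j _ => hint i j]
  simp_rw [integral_finsetSum _ fun j _ => hint _ j, integral_const_mul,
    integral_conj_mul_mul_prod_gauss, mul_ite, mul_zero, Finset.sum_ite_eq, Finset.mem_univ,
    if_true, Finset.mul_sum, mul_comm]

end Moments

lemma modelP_zero_left_mul_modelP_zero_right (n : ℕ) (Y : Fin n → ℂ) :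
    modelP n 0 Y * modelP n Y 0 = ∏ k, gauss (Y k) := by
  simp only [modelP, gauss, Pi.zero_apply, map_zero, ofReal_zero, mul_zero,
    zero_mul, zero_add, add_zero, sub_zero, ← Complex.exp_add, ← Complex.exp_sum, Finset.mul_sum]
  congr 1
  rw [← Finset.sum_add_distrib]
  exact Finset.sum_congr rfl fun k _ => by ring

end ModelKernel

open ModelKernel in
theorem kernel_calculus_linear_linear_general (n : ℕ) (a b c d : Fin n → ℂ) :
    (∫ Y : Fin n → ℂ,
      (∑ i : Fin n, (a i * (0 : ℂ) + b i * (starRingEnd ℂ) (Y i))) * modelP n 0 Y *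
        ((∑ i : Fin n, (c i * Y i + d i * (starRingEnd ℂ) ((0 : Fin n → ℂ) i))) *
          modelP n Y 0)) =
    (1/(Real.pi : ℂ)) * ∑ i : Fin n, b i * c i := by
  have hintegrand : ∀ Y : Fin n → ℂ,
      (∑ i, (a i * 0 + b i * conj (Y i))) * modelP n 0 Y *
        ((∑ i, (c i * Y i + d i * conj ((0 : Fin n → ℂ) i))) * modelP n Y 0) =
      (∑ i, b i * conj (Y i)) * (∑ j, c j * Y j) * ∏ k, gauss (Y k) := by
    intro Y
    rw [← modelP_zero_left_mul_modelP_zero_right]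
    simp only [mul_zero, zero_add, Pi.zero_apply, map_zero, add_zero]
    ring
  simp_rw [hintegrand, integral_sum_mul_conj_mul_sum_mul_prod_gauss, one_div]

/-- Composition of linear kernels: with
`h(Z,Z') = Σ_i (a_i z_i + b_i z̄'_i)` and `h'(Z,Z') = Σ_i (c_i z_i + d_i z̄'_i)`,
`∫ h(0,Y) 𝓟(0,Y) h'(Y,0) 𝓟(Y,0) dY = (1/π) Σ_i b_i c_i`, i.e.
`𝒦[h,h'](0,0) = (1/π) Σ_i b_i c_i`. -/
theorem kernel_calculus_linear_linear (n : ℕ) (hn : 1 ≤ n) (a b c d : Fin n → ℂ) :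
    (∫ Y : Fin n → ℂ,
      (∑ i : Fin n, (a i * (0 : ℂ) + b i * (starRingEnd ℂ) (Y i))) * modelP n 0 Y *
        ((∑ i : Fin n, (c i * Y i + d i * (starRingEnd ℂ) ((0 : Fin n → ℂ) i))) *
          modelP n Y 0)) =
    (1/(Real.pi : ℂ)) * ∑ i : Fin n, b i * c i :=
  kernel_calculus_linear_linear_general n a b c d
end
end
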